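/- Let g : ℝ → ℝ be integrable with g(x) = 0 for all x ∉ [−1, 1], let θ ∈ Θ_k, and let B = {i ∈ {1,…,k} : μ_i ∉ [−1, 1]}. Then ‖g − M_θ‖₁ ≥ (1/2)·Σ_{i ∈ B} w_i. -/
import Mathlib


open MeasureTheory

/-- The Gaussian pdf with mean `μ` and precision `τ`. -/
noncomputable def gaussPdf (μ τ x : ℝ) : ℝ :=
  τ / Real.sqrt (2 * Real.pi) * Real.exp (-(τ ^ 2 * (x - μ) ^ 2) / 2)

lemma gaussPdf_nonneg (μ τ x : ℝ) (hτ : 0 < τ) : 0 ≤ gaussPdf μ τ x := by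
  unfold gaussPdf; positivity

lemma gaussPdf_integrable (μ τ : ℝ) (hτ : 0 < τ) : Integrable (gaussPdf μ τ) := by
  unfold gaussPdf
  have h : Integrable (fun x : ℝ => Real.exp (-(τ^2/2) * x ^ 2)) :=
    integrable_exp_neg_mul_sq (by positivity)
  have h2 := h.comp_sub_right μ
  refine ((h2.const_mul (τ / Real.sqrt (2 * Real.pi)))).congr ?_
  filter_upwards with x
  congr 2
  ring

lemma gaussPdf_integral (μ τ : ℝ) (hτ : 0 < τ) : ∫ x, gaussPdf μ τ x = 1 := by
  unfold gaussPdf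
  rw [MeasureTheory.integral_const_mul]
  have h1 : ∫ x : ℝ, Real.exp (-(τ ^ 2 * (x - μ) ^ 2) / 2)
      = ∫ x : ℝ, Real.exp (-(τ^2/2) * x ^ 2) := by
    rw [← integral_sub_right_eq_self (fun x => Real.exp (-(τ^2/2) * x ^ 2)) μ]
    congr 1; ext x; congr 1; ring
  rw [h1, integral_gaussian]
  have h2 : Real.pi / (τ^2/2) = (2 * Real.pi) / τ^2 := by ring
  rw [h2, Real.sqrt_div' _ (by positivity), Real.sqrt_sq hτ.le]
  field_simp

lemma gaussPdf_half (μ τ : ℝ) (hτ : 0 < τ) :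
    ∫ x in Set.Ici μ, gaussPdf μ τ x = 1/2 := by
  have hint := gaussPdf_integrable μ τ hτ
  have hrefl : ∫ x in Set.Ici μ, gaussPdf μ τ x = ∫ x in Set.Iic μ, gaussPdf μ τ x := by
    have hmp : MeasurePreserving (fun x : ℝ => 2*μ - x) volume volume :=
      Measure.measurePreserving_sub_left volume (2*μ)
    have hemb : MeasurableEmbedding (fun x : ℝ => 2*μ - x) :=
      (Homeomorph.subLeft (2*μ)).measurableEmbedding
    have key := hmp.setIntegral_preimage_emb hemb (gaussPdf μ τ) (Set.Iic μ)
    rw [← key]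
    have hpre : (fun x : ℝ => 2*μ - x) ⁻¹' (Set.Iic μ) = Set.Ici μ := by
      ext x
      simp only [Set.mem_preimage, Set.mem_Iic, Set.mem_Ici]
      constructor <;> intro h <;> linarith
    rw [hpre]
    apply setIntegral_congr_fun measurableSet_Ici
    intro x _
    unfold gaussPdf
    congr 2
    ring
  have hsplit := intervalIntegral.integral_Iio_add_Ici (b := μ)
    hint.integrableOn hint.integrableOn
  have hIio : ∫ x in Set.Iio μ, gaussPdf μ τ x = ∫ x in Set.Iic μ, gaussPdf μ τ x :=
    setIntegral_congr_set Iio_ae_eq_Iic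
  rw [gaussPdf_integral μ τ hτ, hIio, ← hrefl] at hsplit
  linarith

lemma gaussPdf_half' (μ τ : ℝ) (hτ : 0 < τ) :
    ∫ x in Set.Iic μ, gaussPdf μ τ x = 1/2 := by
  have hint := gaussPdf_integrable μ τ hτ
  have hsplit := intervalIntegral.integral_Iio_add_Ici (b := μ)
    hint.integrableOn hint.integrableOn
  have hIio : ∫ x in Set.Iio μ, gaussPdf μ τ x = ∫ x in Set.Iic μ, gaussPdf μ τ x :=
    setIntegral_congr_set Iio_ae_eq_Iic
  rw [gaussPdf_integral μ τ hτ, hIio, gaussPdf_half μ τ hτ] at hsplit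
  linarith

lemma gaussPdf_outside (μ τ : ℝ) (hτ : 0 < τ) (hμ : μ < -1 ∨ 1 < μ) :
    1/2 ≤ ∫ x in (Set.Icc (-1:ℝ) 1)ᶜ, gaussPdf μ τ x := by
  have hint := (gaussPdf_integrable μ τ hτ).integrableOn (s := (Set.Icc (-1:ℝ) 1)ᶜ)
  have hnn : 0 ≤ᵐ[volume.restrict ((Set.Icc (-1:ℝ) 1)ᶜ)] gaussPdf μ τ :=
    Filter.Eventually.of_forall (fun x => gaussPdf_nonneg μ τ x hτ)
  rcases hμ with h | h
  · rw [← gaussPdf_half' μ τ hτ]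
    have hsub : Set.Iic μ ⊆ (Set.Icc (-1:ℝ) 1)ᶜ := by
      intro x hx
      simp only [Set.mem_Iic] at hx
      simp only [Set.mem_compl_iff, Set.mem_Icc, not_and_or, not_le]
      left; linarith
    exact setIntegral_mono_set hint hnn hsub.eventuallyLE
  · rw [← gaussPdf_half μ τ hτ]
    have hsub : Set.Ici μ ⊆ (Set.Icc (-1:ℝ) 1)ᶜ := by
      intro x hx
      simp only [Set.mem_Ici] at hx
      simp only [Set.mem_compl_iff, Set.mem_Icc, not_and_or, not_le]
      right; linarith
    exact setIntegral_mono_set hint hnn hsub.eventuallyLE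

/-- The pdf of the `k`-GMM with weights `w`, means `μ` and precisions `τ`. -/
noncomputable def mix {k : ℕ} (w μ τ : Fin k → ℝ) (x : ℝ) : ℝ :=
  ∑ i, w i * gaussPdf (μ i) (τ i) x

theorem stmt10 (k : ℕ) (g : ℝ → ℝ) (hgint : Integrable g)
    (hgsupp : ∀ x, x ∉ Set.Icc (-1 : ℝ) 1 → g x = 0)
    (w μ τ : Fin k → ℝ) (hw : ∀ i, 0 ≤ w i) (hws : ∑ i, w i = 1) (hτ : ∀ i, 0 < τ i) :
    (1 / 2) * ∑ i ∈ Finset.univ.filter (fun i => μ i < -1 ∨ 1 < μ i), w i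
      ≤ ∫ x, |g x - mix w μ τ x| := by
  set S : Set ℝ := (Set.Icc (-1:ℝ) 1)ᶜ with hS
  have hSmeas : MeasurableSet S := measurableSet_Icc.compl
  have hmix : Integrable (mix w μ τ) := by
    unfold mix
    exact integrable_finset_sum _ fun i _ =>
      (gaussPdf_integrable (μ i) (τ i) (hτ i)).const_mul (w i)
  have habs : Integrable (fun x => |g x - mix w μ τ x|) := (hgint.sub hmix).abs
  have h1 : ∫ x in S, |g x - mix w μ τ x| ≤ ∫ x, |g x - mix w μ τ x| :=
    setIntegral_le_integral habs (Filter.Eventually.of_forall fun x => abs_nonneg _)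
  have h2 : ∫ x in S, |g x - mix w μ τ x| = ∫ x in S, mix w μ τ x := by
    apply setIntegral_congr_fun hSmeas
    intro x hx
    show |g x - mix w μ τ x| = mix w μ τ x
    rw [hgsupp x hx, zero_sub, abs_neg, abs_of_nonneg]
    exact Finset.sum_nonneg fun i _ =>
      mul_nonneg (hw i) (gaussPdf_nonneg _ _ x (hτ i))
  have h3 : ∫ x in S, mix w μ τ x = ∑ i, w i * ∫ x in S, gaussPdf (μ i) (τ i) x := by
    unfold mix
    rw [integral_finset_sum _ fun i _ =>
      ((gaussPdf_integrable (μ i) (τ i) (hτ i)).const_mul (w i)).integrableOn]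
    exact Finset.sum_congr rfl fun i _ => integral_const_mul _ _
  have h4 : ∑ i ∈ Finset.univ.filter (fun i => μ i < -1 ∨ 1 < μ i),
        w i * ∫ x in S, gaussPdf (μ i) (τ i) x
      ≤ ∑ i, w i * ∫ x in S, gaussPdf (μ i) (τ i) x := by
    apply Finset.sum_le_sum_of_subset_of_nonneg (Finset.filter_subset _ _)
    intro i _ _
    exact mul_nonneg (hw i)
      (setIntegral_nonneg hSmeas fun x _ => gaussPdf_nonneg _ _ x (hτ i))
  have h5 : (1 / 2) * ∑ i ∈ Finset.univ.filter (fun i => μ i < -1 ∨ 1 < μ i), w i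
      ≤ ∑ i ∈ Finset.univ.filter (fun i => μ i < -1 ∨ 1 < μ i),
        w i * ∫ x in S, gaussPdf (μ i) (τ i) x := by
    rw [Finset.mul_sum]
    apply Finset.sum_le_sum
    intro i hi
    rw [Finset.mem_filter] at hi
    rw [mul_comm (1/2 : ℝ)]
    exact mul_le_mul_of_nonneg_left (gaussPdf_outside (μ i) (τ i) (hτ i) hi.2) (hw i)
  linarith
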